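/- The spherical spatial map h is injective and sphere-valued (Appendix C.4): Let d ≥ 0 and ε > 0, and for y ∈ 𝕊^d define k(y) = (π / (2(1+ε))) · ((1/(d+1)) · ∑_{i=0}^{d} y_i + 1 + ε). Define h : 𝕊^d → ℝ × ℝ^{d+1} by h(y) = (cos k(y), sin k(y) · y). Then (i) ‖h(y)‖ = 1 for every y ∈ 𝕊^d (so h takes values in the unit sphere of ℝ^{d+2}), and (ii) h is injective: if y, y' ∈ 𝕊^d and h(y) = h(y'), then y = y'. -/
import Mathlib


open scoped InnerProductSpace

noncomputable section

/-- The auxiliary function `k` of Appendix C.4. -/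
def sphK (d : ℕ) (ε : ℝ) (y : EuclideanSpace ℝ (Fin (d + 1))) : ℝ :=
  (Real.pi / (2 * (1 + ε))) * ((1 / (d + 1 : ℝ)) * (∑ i, y i) + 1 + ε)

/-- The spherical spatial map `h(y) = (cos k(y), sin k(y) · y)`, viewed as a map
into `ℝ × ℝ^{d+1}` equipped with the Euclidean (`L²`) norm
`‖(s, v)‖ = √(s² + ‖v‖²)`. -/
def sphH (d : ℕ) (ε : ℝ) (y : EuclideanSpace ℝ (Fin (d + 1))) :
    WithLp 2 (ℝ × EuclideanSpace ℝ (Fin (d + 1))) :=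
  (WithLp.equiv 2 (ℝ × EuclideanSpace ℝ (Fin (d + 1)))).symm
    (Real.cos (sphK d ε y), Real.sin (sphK d ε y) • y)

lemma sphK_mem (d : ℕ) (ε : ℝ) (hε : 0 < ε) (y : EuclideanSpace ℝ (Fin (d + 1)))
    (hy : ‖y‖ = 1) : 0 < sphK d ε y ∧ sphK d ε y < Real.pi := by
  have hd : (0 : ℝ) < (d : ℝ) + 1 := by positivity
  have habs : |(1 / (d + 1 : ℝ)) * (∑ i, y i)| ≤ 1 := by
    have hcoord : ∀ i, |y i| ≤ 1 := by
      intro i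
      have : |y i| ≤ ‖y‖ := by
        rw [EuclideanSpace.norm_eq]
        rw [Real.le_sqrt (abs_nonneg _) (by positivity)]
        have : |y i| ^ 2 ≤ ∑ j, ‖y j‖ ^ 2 := by
          have := Finset.single_le_sum (f := fun j => ‖y j‖ ^ 2)
            (fun j _ => by positivity) (Finset.mem_univ i)
          simpa [Real.norm_eq_abs] using this
        simpa using this
      simpa [hy] using this
    have hsum : |∑ i, y i| ≤ (d : ℝ) + 1 := by
      calc |∑ i, y i| ≤ ∑ i, |y i| := Finset.abs_sum_le_sum_abs _ _
        _ ≤ ∑ _i : Fin (d + 1), (1 : ℝ) := Finset.sum_le_sum fun i _ => hcoord i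
        _ = (d : ℝ) + 1 := by
              rw [Finset.sum_const, Finset.card_fin, nsmul_eq_mul]; push_cast; ring
    rw [abs_mul, abs_of_pos (by positivity : (0:ℝ) < 1 / ((d:ℝ)+1))]
    rw [div_mul_eq_mul_div, one_mul, div_le_one hd]
    exact hsum
  have h1 : -1 ≤ (1 / (d + 1 : ℝ)) * (∑ i, y i) := (abs_le.mp habs).1
  have h2 : (1 / (d + 1 : ℝ)) * (∑ i, y i) ≤ 1 := (abs_le.mp habs).2
  have hc : (0 : ℝ) < Real.pi / (2 * (1 + ε)) := by
    have := Real.pi_pos; positivity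
  constructor
  · apply mul_pos hc; linarith
  · have : sphK d ε y ≤ (Real.pi / (2 * (1 + ε))) * (2 + ε) := by
      unfold sphK
      apply mul_le_mul_of_nonneg_left (by linarith) hc.le
    refine lt_of_le_of_lt this ?_
    have hlt : (2 + ε) / (2 * (1 + ε)) < 1 := by
      rw [div_lt_one (by linarith)]; nlinarith
    calc Real.pi / (2 * (1 + ε)) * (2 + ε)
        = Real.pi * ((2 + ε) / (2 * (1 + ε))) := by ring
      _ < Real.pi * 1 := mul_lt_mul_of_pos_left hlt Real.pi_pos
      _ = Real.pi := mul_one _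

/-- The spherical spatial map `h` of Appendix C.4 is sphere-valued and
injective on the unit sphere `𝕊^d`. -/
theorem spherical_spatial_map_sphere_valued_and_injective
    (d : ℕ) (ε : ℝ) (hε : 0 < ε) :
    (∀ y : EuclideanSpace ℝ (Fin (d + 1)), ‖y‖ = 1 → ‖sphH d ε y‖ = 1) ∧
      (∀ y y' : EuclideanSpace ℝ (Fin (d + 1)), ‖y‖ = 1 → ‖y'‖ = 1 →
        sphH d ε y = sphH d ε y' → y = y') := by
  constructor
  · intro y hy
    have hsq : ‖sphH d ε y‖ ^ 2 = 1 := by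
      rw [WithLp.prod_norm_sq_eq_of_L2]
      have : (sphH d ε y).fst = Real.cos (sphK d ε y) := rfl
      rw [this]
      have : (sphH d ε y).snd = Real.sin (sphK d ε y) • y := rfl
      rw [this, norm_smul, Real.norm_eq_abs, hy, mul_one, Real.norm_eq_abs,
        sq_abs, sq_abs, Real.cos_sq_add_sin_sq]
    nlinarith [norm_nonneg (sphH d ε y)]
  · intro y y' hy hy' heq
    have hfst : Real.cos (sphK d ε y) = Real.cos (sphK d ε y') :=
      congrArg Prod.fst (congrArg (WithLp.equiv 2 _) heq)
    have hsnd : Real.sin (sphK d ε y) • y = Real.sin (sphK d ε y') • y' :=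
      congrArg Prod.snd (congrArg (WithLp.equiv 2 _) heq)
    obtain ⟨hk0, hkπ⟩ := sphK_mem d ε hε y hy
    obtain ⟨hk0', hkπ'⟩ := sphK_mem d ε hε y' hy'
    have hk : sphK d ε y = sphK d ε y' :=
      Real.injOn_cos ⟨hk0.le, hkπ.le⟩ ⟨hk0'.le, hkπ'.le⟩ hfst
    have hsin : Real.sin (sphK d ε y) ≠ 0 :=
      ne_of_gt (Real.sin_pos_of_pos_of_lt_pi hk0 hkπ)
    rw [hk] at hsnd hsin
    exact smul_right_injective _ hsin hsnd
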